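/- Let f(x) = a_0 x^n + ... + a_n be a real polynomial of degree n with a_0 > 0, let 2 ≤ M ≤ n, and suppose that none of the polynomials f_0, f_1, ..., f_n produced by the generalized Euclidean algorithm with step M is the zero polynomial. Then for every i = 1, ..., n, the minor H_M(k+1, r−1) is nonzero and the leading coefficient h_i of f_i satisfies h_i = H_M(k+1, r) / H_M(k+1, r−1), where r = ⌈ i/(M−1) ⌉, k = r(M−1) − i, and H_M(k+1, 0) := 1. -/

import Mathlib

/-!
When no `f_i` vanishes, every `f_i` only has exponents `≡ n - i (mod M)`, so a drop of
`deg f_i` below `n - i` is a drop by at least `M`; such a drop would propagate along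
`f_{i+M-1} = f_{i-1} mod f_i` beyond index `n`. Hence `deg f_i = n - i`, and each step of the
algorithm is a single division step `f_{j+M} = f_j - (h_j / h_{j+1}) x f_{j+1}`.

Row `k + s` of `H_M(f)` is the coefficient vector of `x^{M(t+1)} f_j` at `x^{n+k+s+1}` for the
`j < M` with `j + k + s + 1 ≡ 0 (mod M)`, and multiplying by `x` moves such a vector one row
up. So the division steps are row operations adding multiples of earlier rows, which turn the
matrix of `H_M(k+1, r)` into a triangular one with diagonal `h_{(M-1)(s+1)-k}`, `s < r`.
Consecutive minors therefore differ by the factor `h_{r(M-1)-k} = h_i`.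
-/

open Polynomial

/-- The arithmetic part `f_j` of the polynomial with coefficients `a_0,...,a_n`:
`f_j(x) = Σ_{0 ≤ l ≤ n, l ≡ j (mod M)} a_l x^(n-l)`. -/
noncomputable def geaInit (a : ℕ → ℝ) (n M j : ℕ) : Polynomial ℝ :=
  ∑ l ∈ Finset.range (n + 1), if l % M = j then C (a l) * X ^ (n - l) else 0

/-- The polynomials `f_0, f_1, ..., f_n` of the generalized Euclidean algorithm with step `M`:
`f_i = d_i f_{i+1} + f_{i+M}` where `d_i = f_i / f_{i+1}` and `f_{i+M} = f_i % f_{i+1}`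
(Euclidean division of polynomials). -/
noncomputable def gea (a : ℕ → ℝ) (n M : ℕ) : ℕ → Polynomial ℝ
  | i =>
    if _h : i < M then geaInit a n M i
    else if _h2 : 2 ≤ M then
      gea a n M (i - M) % gea a n M (i - M + 1)
    else 0
  termination_by i => i
  decreasing_by all_goals omega

/-- Entry `(i,j)` (0-based) of the generalized Hurwitz matrix `H_M(f) = (a_{Mj-i})_{i,j≥1}`,
with `a_k := 0` for `k < 0` and `k > n`. -/
def hEntry (a : ℕ → ℝ) (n M : ℕ) (i j : ℕ) : ℝ :=
  if i + 1 ≤ M * (j + 1) ∧ M * (j + 1) - (i + 1) ≤ n then a (M * (j + 1) - (i + 1)) else 0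

/-- The special minor `H_M(k,r)` on rows `k, k+1, ..., k+r-1` and columns `1, ..., r`
(1-based indexing); for `r = 0` it is the empty determinant `1`. -/
noncomputable def specialMinor (a : ℕ → ℝ) (n M k r : ℕ) : ℝ :=
  Matrix.det (Matrix.of fun s t : Fin r => hEntry a n M (k - 1 + s) t)

namespace Matrix

variable {m R : Type*} [Fintype m] [DecidableEq m] [LinearOrder m] [CommRing R]

theorem det_eq_of_row_sub_mem_span_Iio (A B : m → m → R)
    (h : ∀ i, B i - A i ∈ Submodule.span R (A '' Set.Iio i)) : (of B).det = (of A).det := by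
  choose l hl hlA using fun i => (Finsupp.mem_span_image_iff_linearCombination R).1 (h i)
  have hl_eq_zero : ∀ i j, ¬ j < i → l i j = 0 := fun i j hji =>
    Finsupp.notMem_support_iff.1 fun hj => hji (hl i hj)
  set L : Matrix m m R := 1 + of fun i j => l i j
  have hLA : L * of A = of B := by
    ext i k
    have hrow : B i = A i + ∑ j, l i j • A j := by
      have := hlA i
      rw [Finsupp.linearCombination_apply, Finsupp.sum_fintype _ _ (by simp)] at this
      exact eq_add_of_sub_eq' this.symm
    simp [L, add_mul, mul_apply, hrow, Finset.sum_add_distrib, one_apply]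
  have hL : L.det = 1 := by
    rw [det_of_isLowerTriangular L fun i j hij => ?_]
    · exact Finset.prod_eq_one fun i _ => by simp [L, hl_eq_zero i i (lt_irrefl i)]
    · have hij : i < j := hij
      simp [L, hl_eq_zero i j (lt_asymm hij), hij.ne]
  rw [← hLA, det_mul, hL, one_mul]

end Matrix

namespace Polynomial

def exponentClass (K : Type*) [Field K] (m : ℕ) (c : ZMod m) : Submodule K K[X] where
  carrier := {p | ∀ e : ℕ, (e : ZMod m) ≠ c → p.coeff e = 0}
  add_mem' hp hq e he := by simp [hp e he, hq e he]
  zero_mem' _ _ := coeff_zero _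
  smul_mem' a p hp e he := by simp [hp e he]

variable {K : Type*} [Field K] {m : ℕ}

theorem natCast_natDegree_of_mem_exponentClass {c : ZMod m} {p : K[X]}
    (hp : p ∈ exponentClass K m c) (hp0 : p ≠ 0) : (p.natDegree : ZMod m) = c := by
  by_contra h
  exact leadingCoeff_ne_zero.2 hp0 (hp _ h)

theorem C_mul_X_pow_mul_mem_exponentClass {c : ZMod m} {q : K[X]} (hq : q ∈ exponentClass K m c)
    (a : K) (d : ℕ) : C a * X ^ d * q ∈ exponentClass K m (d + c) := by
  intro e he
  rw [mul_assoc, coeff_C_mul, coeff_X_pow_mul']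
  split_ifs with hde
  · rw [hq (e - d) fun h => he (by rw [← h, Nat.cast_sub hde]; ring), mul_zero]
  · rw [mul_zero]

theorem mod_mem_exponentClass {u v : ZMod m} {p q : K[X]} (hp : p ∈ exponentClass K m u)
    (hq : q ∈ exponentClass K m v) : p % q ∈ exponentClass K m u := by
  induction p using degree_lt_wf.induction with
  | _ p ih =>
  obtain rfl | hq0 := eq_or_ne q 0
  · rwa [EuclideanDomain.mod_zero]
  by_cases hpq : p.degree < q.degree
  · rwa [(mod_eq_self_iff hq0).2 hpq]
  have hp0 : p ≠ 0 := by rintro rfl; simp [degree_zero, bot_lt_iff_ne_bot, hq0] at hpq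
  have hdeg : q.natDegree ≤ p.natDegree := natDegree_le_natDegree (not_lt.1 hpq)
  set r := C (p.leadingCoeff / q.leadingCoeff) * X ^ (p.natDegree - q.natDegree) * q
  have hr : r ∈ exponentClass K m u := by
    convert C_mul_X_pow_mul_mem_exponentClass hq _ _ using 2
    rw [Nat.cast_sub hdeg, natCast_natDegree_of_mem_exponentClass hp hp0,
      natCast_natDegree_of_mem_exponentClass hq hq0, sub_add_cancel]
  have hrdeg : r.degree = p.degree := by
    rw [degree_mul, degree_C_mul_X_pow _ (div_ne_zero (leadingCoeff_ne_zero.2 hp0)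
      (leadingCoeff_ne_zero.2 hq0)), degree_eq_natDegree hp0, degree_eq_natDegree hq0]
    norm_cast; omega
  have hrlc : r.leadingCoeff = p.leadingCoeff := by
    simp [r, leadingCoeff_ne_zero.2 hq0]
  rw [mod_eq_of_dvd_sub (p₂ := p - r) (by simp [r])]
  exact ih _ (degree_sub_lt_left hrdeg.symm hp0 hrlc.symm) (sub_mem hp hr)

theorem mod_eq_sub_C_mul_X_mul_of_mem_exponentClass (hm : 2 ≤ m) {u : ZMod m} {p q : K[X]}
    (hp : p ∈ exponentClass K m (u + 1)) (hq : q ∈ exponentClass K m u) (hq0 : q ≠ 0)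
    (hpq : p.natDegree = q.natDegree + 1) :
    p % q = p - C (p.leadingCoeff / q.leadingCoeff) * X * q := by
  have hp0 : p ≠ 0 := by rintro rfl; simp at hpq
  set c := p.leadingCoeff / q.leadingCoeff
  have hc0 : c ≠ 0 := div_ne_zero (leadingCoeff_ne_zero.2 hp0) (leadingCoeff_ne_zero.2 hq0)
  have hlc : (C c * X * q).leadingCoeff = p.leadingCoeff := by
    simp [c, leadingCoeff_ne_zero.2 hq0]
  have hdeg_eq : (C c * X * q).degree = p.degree := by
    rw [degree_mul, degree_C_mul_X hc0, degree_eq_natDegree hp0, degree_eq_natDegree hq0, hpq]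
    norm_cast
    omega
  have hmem : p - C c * X * q ∈ exponentClass K m (u + 1) := by
    refine sub_mem hp ?_
    simpa [add_comm] using C_mul_X_pow_mul_mem_exponentClass hq c 1
  have hdeg : (p - C c * X * q).degree < q.degree := by
    obtain hr0 | hr0 := eq_or_ne (p - C c * X * q) 0
    · rw [hr0, degree_zero, bot_lt_iff_ne_bot, Ne, degree_eq_bot]
      exact hq0
    refine degree_lt_degree ?_
    have hlt := natDegree_lt_natDegree hr0 (degree_sub_lt_left hdeg_eq.symm hp0 hlc.symm)
    have hmod : (p - C c * X * q).natDegree ≡ q.natDegree + 1 [MOD m] := by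
      rw [← ZMod.natCast_eq_natCast_iff, natCast_natDegree_of_mem_exponentClass hmem hr0,
        Nat.cast_succ, natCast_natDegree_of_mem_exponentClass hq hq0]
    have := hmod.add_le_of_lt (by omega)
    omega
  rw [mod_eq_of_dvd_sub (p₂ := p - C c * X * q) ⟨C c * X, by ring⟩,
    (mod_eq_self_iff hq0).2 hdeg]

end Polynomial

section GeneralizedEuclid

variable {a : ℕ → ℝ} {n M : ℕ}

theorem gea_of_lt {j : ℕ} (h : j < M) : gea a n M j = geaInit a n M j := by
  rw [gea]; simp [h]

theorem gea_add (hM : 2 ≤ M) (j : ℕ) : gea a n M (j + M) = gea a n M j % gea a n M (j + 1) := by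
  rw [gea]; simp [hM]

theorem coeff_geaInit (j e : ℕ) :
    (geaInit a n M j).coeff e = if e ≤ n ∧ (n - e) % M = j then a (n - e) else 0 := by
  simp only [geaInit, finsetSum_coeff, apply_ite (coeff · e), coeff_C_mul_X_pow, coeff_zero]
  split_ifs with he
  · rw [Finset.sum_eq_single (n - e)] <;> grind
  · refine Finset.sum_eq_zero fun l hl => ?_
    grind

theorem gea_mem_exponentClass (hM : 2 ≤ M) (i : ℕ) :
    gea a n M i ∈ exponentClass ℝ M (n - i) := by
  induction i using Nat.strong_induction_on with
  | _ i ih =>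
  obtain hi | hi := lt_or_ge i M
  · intro e he
    rw [gea_of_lt hi, coeff_geaInit, if_neg]
    rintro ⟨hen, hmod⟩
    refine he ?_
    rw [← hmod, ZMod.natCast_mod, Nat.cast_sub hen, sub_sub_cancel]
  obtain ⟨j, rfl⟩ := Nat.exists_eq_add_of_le' hi
  rw [gea_add hM]
  convert mod_mem_exponentClass (ih j (by omega)) (ih (j + 1) (by omega)) using 1
  rw [Nat.cast_add, ZMod.natCast_self, add_zero]

theorem natDegree_gea_add_modEq (hM : 2 ≤ M) {i : ℕ} (h : gea a n M i ≠ 0) :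
    (gea a n M i).natDegree + i ≡ n [MOD M] := by
  rw [← ZMod.natCast_eq_natCast_iff, Nat.cast_add,
    natCast_natDegree_of_mem_exponentClass (gea_mem_exponentClass hM i) h, sub_add_cancel]

theorem natDegree_geaInit_add_le {j : ℕ} (hj : j ≤ n) :
    (geaInit a n M j).natDegree + j ≤ n := by
  have : (geaInit a n M j).natDegree ≤ n - j := natDegree_le_iff_coeff_eq_zero.2 fun e he => by
    rw [coeff_geaInit, if_neg]
    rintro ⟨hen, hmod⟩
    have := hmod ▸ Nat.mod_le (n - e) M
    omega
  omega

variable (hnz : ∀ i ≤ n, gea a n M i ≠ 0)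
include hnz

theorem natDegree_gea_add_lt (hM : 2 ≤ M) {j : ℕ} (hj : j + M ≤ n) :
    (gea a n M (j + M)).natDegree < (gea a n M (j + 1)).natDegree := by
  refine natDegree_lt_natDegree (hnz _ hj) ?_
  rw [gea_add hM]
  exact degree_mod_lt _ (hnz _ (by omega))

theorem natDegree_gea_add_le (hM : 2 ≤ M) {i : ℕ} (hi : i ≤ n) :
    (gea a n M i).natDegree + i ≤ n := by
  induction i using Nat.strong_induction_on with
  | _ i ih =>
  obtain hiM | hiM := lt_or_ge i M
  · rw [gea_of_lt hiM]
    exact natDegree_geaInit_add_le hi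
  obtain ⟨j, rfl⟩ := Nat.exists_eq_add_of_le' hiM
  have := natDegree_gea_add_lt hnz hM hi
  have := ih (j + 1) (by omega) (by omega)
  exact (natDegree_gea_add_modEq hM (hnz _ hi)).le_of_lt_add (by omega)

theorem natDegree_gea_add_lt_of_lt (hM : 2 ≤ M) {j : ℕ} (hj : j + 1 ≤ n)
    (hlt : (gea a n M (j + 1)).natDegree + (j + 1) < n) :
    j + M ≤ n ∧ (gea a n M (j + M)).natDegree + (j + M) < n := by
  have hgap := (natDegree_gea_add_modEq hM (hnz _ hj)).add_le_of_lt hlt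
  have := natDegree_gea_add_lt hnz hM (j := j) (by omega)
  omega

theorem natDegree_gea_add_eq (hM : 2 ≤ M) (ha0 : a 0 ≠ 0) {i : ℕ} (hi : i ≤ n) :
    (gea a n M i).natDegree + i = n := by
  refine le_antisymm (natDegree_gea_add_le hnz hM hi) ?_
  obtain _ | j := i
  · refine le_natDegree_of_ne_zero ?_
    rwa [gea_of_lt (by omega), coeff_geaInit, if_pos ⟨le_rfl, by simp⟩, Nat.sub_self]
  by_contra! hlt
  -- a degree drop at `j + 1` would force one at `j + M`, and so on beyond `n`
  induction hd : n - j using Nat.strong_induction_on generalizing j with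
  | _ d ih =>
  obtain ⟨hjM, hlt'⟩ := natDegree_gea_add_lt_of_lt hnz hM hi hlt
  exact ih (n - (j + M - 1)) (by omega) (j + M - 1) (by omega)
    (by rwa [Nat.sub_add_cancel (by omega)]) rfl

theorem gea_add_eq_sub (hM : 2 ≤ M) (ha0 : a 0 ≠ 0) {j : ℕ} (hj : j + M ≤ n) :
    gea a n M (j + M) = gea a n M j - C ((gea a n M j).leadingCoeff /
      (gea a n M (j + 1)).leadingCoeff) * X * gea a n M (j + 1) := by
  have hp := natDegree_gea_add_eq hnz hM ha0 (i := j) (by omega)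
  have hq := natDegree_gea_add_eq hnz hM ha0 (i := j + 1) (by omega)
  rw [gea_add hM]
  refine mod_eq_sub_C_mul_X_mul_of_mem_exponentClass hM ?_ (gea_mem_exponentClass hM _)
    (hnz _ (by omega)) (by omega)
  convert gea_mem_exponentClass hM j using 2
  push_cast
  ring

end GeneralizedEuclid

section HurwitzRows

variable {K : Type*} [CommRing K] (M N r : ℕ)

noncomputable def hurwitzRow (p : K[X]) (s : ℕ) : Fin r → K :=
  fun t => (X ^ (M * (t + 1)) * p).coeff (N + s)

theorem hurwitzRow_sub_C_mul_X_mul (p q : K[X]) (c : K) (s : ℕ) :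
    hurwitzRow M N r (p - C c * X * q) (s + 1) =
      hurwitzRow M N r p (s + 1) - c • hurwitzRow M N r q s := by
  ext t
  have : X ^ (M * (t + 1)) * (C c * X * q) = C c * (X * (X ^ (M * (t + 1)) * q)) := by ring
  simp only [hurwitzRow, mul_sub, coeff_sub, this, coeff_C_mul, ← add_assoc, coeff_X_mul,
    Pi.sub_apply, Pi.smul_apply, smul_eq_mul]

theorem det_hurwitzRow_eq_prod (hM : 0 < M) (p : ℕ → K[X])
    (hp : ∀ s < r, (p s).natDegree + M * (s + 1) = N + s) :
    (Matrix.of fun s : Fin r => hurwitzRow M N r (p s) s).det =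
      ∏ s : Fin r, (p s).leadingCoeff := by
  rw [Matrix.det_of_isUpperTriangular]
  · refine Finset.prod_congr rfl fun s _ => ?_
    have := hp s s.2
    simp only [Matrix.of_apply, hurwitzRow, coeff_X_pow_mul',
      if_pos (show M * (s + 1) ≤ N + s by omega),
      show N + s - M * (s + 1) = (p s).natDegree by omega, leadingCoeff]
  · intro s t (hts : t < s)
    have := hp s s.2
    have : M * (t + 1) + M ≤ M * (s + 1) := by
      rw [← mul_add_one]; exact Nat.mul_le_mul_left M (by omega)
    simp only [Matrix.of_apply, hurwitzRow, coeff_X_pow_mul']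
    split_ifs
    · exact coeff_eq_zero_of_natDegree_lt (by omega)
    · rfl

end HurwitzRows

section HurwitzMinors

variable {a : ℕ → ℝ} {n M : ℕ}

theorem hEntry_eq_hurwitzRow {j k s r : ℕ} (hj : j < M) (hdvd : M ∣ j + k + s + 1) (t : Fin r) :
    hEntry a n M (k + s) t = hurwitzRow M (n + k + 1) r (gea a n M j) s t := by
  have hmod : ∀ l, l + (k + s + 1) = M * (t + 1) → l % M = j := fun l hl => by
    have h : l ≡ j [MOD M] := Nat.ModEq.add_right_cancel' (k + s + 1) <|
      (Nat.modEq_zero_iff_dvd.2 ⟨t + 1, hl⟩).trans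
        (Nat.modEq_zero_iff_dvd.2 (by rwa [← add_assoc, ← add_assoc])).symm
    rwa [Nat.ModEq, Nat.mod_eq_of_lt hj] at h
  rw [hurwitzRow, gea_of_lt hj, coeff_X_pow_mul', hEntry]
  split_ifs with h1 h2 h2
  · have he : n - (n + k + 1 + s - M * (t + 1)) = M * (t + 1) - (k + s + 1) := by omega
    rw [coeff_geaInit, he, if_pos ⟨by omega, hmod _ (by omega)⟩]
  · omega
  · rw [coeff_geaInit, if_neg fun h => h1 ⟨by omega, by omega⟩]
  · rfl

variable (hnz : ∀ i ≤ n, gea a n M i ≠ 0)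
include hnz

-- The bound on `v + k + s + 1` forces `s ≥ 1` once `v ≥ M`, so the division step
-- `f_v = f_{v-M} - c x f_{v-M+1}` always has a row above `s` to act with.
theorem hurwitzRow_gea_sub_mem_span (hM : 2 ≤ M) (ha0 : a 0 ≠ 0) {k r v s : ℕ} (hv : v ≤ n)
    (hs : s < r) (hdvd : M ∣ v + k + s + 1) (hle : v + k + s + 1 ≤ M * (s + 1)) :
    hurwitzRow M (n + k + 1) r (gea a n M v) s - (fun t : Fin r => hEntry a n M (k + s) t) ∈
      Submodule.span ℝ ((fun s' (t : Fin r) => hEntry a n M (k + s') t) '' Set.Iio s) := by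
  induction v using Nat.strong_induction_on generalizing s with
  | _ v ih =>
  obtain hvM | hvM := lt_or_ge v M
  · rw [show hurwitzRow M (n + k + 1) r (gea a n M v) s = fun t : Fin r => hEntry a n M (k + s) t
      from funext fun t => (hEntry_eq_hurwitzRow hvM hdvd t).symm, sub_self]
    exact zero_mem _
  obtain ⟨j, rfl⟩ := Nat.exists_eq_add_of_le' hvM
  obtain _ | s := s
  · rw [zero_add, mul_one] at hle
    omega
  have hM2 : M * (s + 1 + 1) = M * (s + 1) + M := mul_add_one _ _
  have hdvd' : M ∣ j + k + (s + 1) + 1 :=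
    (Nat.dvd_add_right (dvd_refl M)).1 (by convert hdvd using 1; ring)
  have hcur := ih j (by omega) (by omega) hs hdvd' (by omega)
  have hprev := ih (j + 1) (by omega) (by omega) (s := s) (by omega)
    (by convert hdvd' using 1; ring) (by omega)
  set A : ℕ → Fin r → ℝ := fun s' t => hEntry a n M (k + s') t
  have hmono : Submodule.span ℝ (A '' Set.Iio s) ≤ Submodule.span ℝ (A '' Set.Iio (s + 1)) :=
    Submodule.span_mono (Set.image_mono (Set.Iio_subset_Iio (by omega)))
  have hrow : A s ∈ Submodule.span ℝ (A '' Set.Iio (s + 1)) :=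
    Submodule.subset_span ⟨s, Set.mem_Iio.2 (by omega), rfl⟩
  rw [gea_add_eq_sub hnz hM ha0 hv, hurwitzRow_sub_C_mul_X_mul]
  convert sub_mem hcur (Submodule.smul_mem _
    ((gea a n M j).leadingCoeff / (gea a n M (j + 1)).leadingCoeff) (add_mem (hmono hprev) hrow))
    using 1
  module

theorem specialMinor_eq_prod (hM : 2 ≤ M) (ha0 : a 0 ≠ 0) {k r : ℕ} (hk : k + 2 ≤ M)
    (hr : r * (M - 1) ≤ n + k) :
    specialMinor a n M (k + 1) r =
      ∏ s : Fin r, (gea a n M ((M - 1) * (s + 1) - k)).leadingCoeff := by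
  have hidx : ∀ s < r, (M - 1) * (s + 1) - k + k + s + 1 = M * (s + 1) ∧
      (M - 1) * (s + 1) - k ≤ n := fun s hs => by
    have h1 : (M - 1) * (s + 1) + (s + 1) = M * (s + 1) := by
      rw [← add_one_mul, Nat.sub_add_cancel (by omega)]
    have h2 : M - 1 ≤ (M - 1) * (s + 1) := Nat.le_mul_of_pos_right _ (by omega)
    have h3 : (M - 1) * (s + 1) ≤ r * (M - 1) := by
      rw [mul_comm]; exact Nat.mul_le_mul_right _ hs
    omega
  rw [specialMinor, Nat.add_sub_cancel, ← det_hurwitzRow_eq_prod M (n + k + 1) r (by omega)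
    (fun s => gea a n M ((M - 1) * (s + 1) - k)) fun s hs => ?_]
  · refine (Matrix.det_eq_of_row_sub_mem_span_Iio _ _ fun i => ?_).symm
    obtain ⟨hsum, hle⟩ := hidx i i.2
    have h := hurwitzRow_gea_sub_mem_span hnz hM ha0 hle i.2 ⟨i + 1, by rw [hsum]⟩ hsum.le
    rwa [← Fin.image_val_Iio, Set.image_image] at h
  · obtain ⟨hsum, hle⟩ := hidx s hs
    have := natDegree_gea_add_eq hnz hM ha0 hle
    omega

theorem specialMinor_ne_zero_and_leadingCoeff_gea_eq_div (hM : 2 ≤ M) (ha0 : a 0 ≠ 0)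
    {k r : ℕ} (hk : k + 2 ≤ M) (hr : (r + 1) * (M - 1) ≤ n + k) :
    specialMinor a n M (k + 1) r ≠ 0 ∧ (gea a n M ((r + 1) * (M - 1) - k)).leadingCoeff =
      specialMinor a n M (k + 1) (r + 1) / specialMinor a n M (k + 1) r := by
  have hr' : r * (M - 1) ≤ n + k := le_trans (Nat.mul_le_mul_right _ r.le_succ) hr
  rw [specialMinor_eq_prod hnz hM ha0 hk hr, specialMinor_eq_prod hnz hM ha0 hk hr',
    Fin.prod_univ_castSucc]
  have hprod : ∏ s : Fin r, (gea a n M ((M - 1) * (s + 1) - k)).leadingCoeff ≠ 0 :=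
    Finset.prod_ne_zero_iff.2 fun s _ => leadingCoeff_ne_zero.2 <| hnz _ <| by
      have := Nat.mul_le_mul_left (M - 1) (show (s : ℕ) + 1 ≤ r from s.2)
      rw [Nat.mul_comm r] at hr'
      omega
  refine ⟨hprod, ?_⟩
  simp only [Fin.val_castSucc, Fin.val_last, mul_comm (M - 1) (r + 1)]
  rw [mul_div_cancel_left₀ _ hprod]

end HurwitzMinors

theorem leading_coeff_eq_ratio_of_special_minors_general
    (n M : ℕ) (a : ℕ → ℝ) (ha0 : 0 < a 0) (hM : 2 ≤ M)
    (hnz : ∀ i ≤ n, gea a n M i ≠ 0) :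
    ∀ i : ℕ, 1 ≤ i → i ≤ n →
      specialMinor a n M ((i + M - 2) / (M - 1) * (M - 1) - i + 1)
          ((i + M - 2) / (M - 1) - 1) ≠ 0 ∧
      (gea a n M i).leadingCoeff =
        specialMinor a n M ((i + M - 2) / (M - 1) * (M - 1) - i + 1)
            ((i + M - 2) / (M - 1)) /
          specialMinor a n M ((i + M - 2) / (M - 1) * (M - 1) - i + 1)
            ((i + M - 2) / (M - 1) - 1) := by
  intro i hi hin
  obtain ⟨r, hr⟩ : ∃ r, (i + M - 2) / (M - 1) = r + 1 :=
    ⟨_, (Nat.succ_pred_eq_of_pos (Nat.div_pos (by omega) (by omega))).symm⟩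
  have hdiv := Nat.div_add_mod (i + M - 2) (M - 1)
  have hmod := Nat.mod_lt (i + M - 2) (show 0 < M - 1 by omega)
  rw [hr, Nat.mul_comm] at hdiv
  rw [hr, Nat.add_sub_cancel]
  have key := specialMinor_ne_zero_and_leadingCoeff_gea_eq_div hnz hM ha0.ne'
    (k := (r + 1) * (M - 1) - i) (r := r) (by omega) (by omega)
  rwa [show (r + 1) * (M - 1) - ((r + 1) * (M - 1) - i) = i by omega] at key

/-- In the non-degenerate case of the generalized Euclidean algorithm, for `1 ≤ i ≤ n`, the
leading coefficient `h_i` of `f_i` equals the ratio `H_M(k+1,r)/H_M(k+1,r-1)` of special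
minors, where `r = ⌈i/(M-1)⌉` and `k = r(M-1) - i`. -/
theorem leading_coeff_eq_ratio_of_special_minors
    (n M : ℕ) (a : ℕ → ℝ) (ha0 : 0 < a 0) (hM : 2 ≤ M) (hMn : M ≤ n)
    (hnz : ∀ i ≤ n, gea a n M i ≠ 0) :
    ∀ i : ℕ, 1 ≤ i → i ≤ n →
      specialMinor a n M ((i + M - 2) / (M - 1) * (M - 1) - i + 1)
          ((i + M - 2) / (M - 1) - 1) ≠ 0 ∧
      (gea a n M i).leadingCoeff =
        specialMinor a n M ((i + M - 2) / (M - 1) * (M - 1) - i + 1)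
            ((i + M - 2) / (M - 1)) /
          specialMinor a n M ((i + M - 2) / (M - 1) * (M - 1) - i + 1)
            ((i + M - 2) / (M - 1) - 1) :=
  leading_coeff_eq_ratio_of_special_minors_general n M a ha0 hM hnz
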